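/- arXiv:1305.7122 — 3 statements merged into one kernel-verified Lean document; each statement's English description precedes it below -/
import Mathlib

section
/- (Equality of the sup- and inf-characterizations of the principal eigenvalue in presence of an eigenfunction.) Define $\mu_p(\mathcal{L}_\Omega + a) := \sup\{\mu : \exists \phi \in C(\bar\Omega), \phi > 0, \mathcal{L}_\Omega\phi + a\phi + \mu\phi \le 0\}$ and $\mu_p'(\mathcal{L}_\Omega + a) := \inf\{\mu : \exists \phi \in C(\bar\Omega), \phi > 0, \mathcal{L}_\Omega\phi + a\phi + \mu\phi \ge 0\}$. If $\mu_p(\mathcal{L}_\Omega + a)$ admits a positive continuous eigenfunction (i.e. $\mathcal{L}_\Omega\psi + a\psi + \mu_p\psi = 0$ for some $\psi \in C(\bar\Omega)$, $\psi > 0$), and $K$ satisfies $K(x,y) \ge c_0 > 0$ for $|x-y| < \epsilon_0$ and $\Omega$ is connected in the sense that the kernel positivity propagates, then $\mu_p(\mathcal{L}_\Omega + a) = \mu_p'(\mathcal{L}_\Omega + a)$. -/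
open MeasureTheory Set

/-- The generalized principal eigenvalue (sup-characterization). -/
noncomputable def muP {n : ℕ} (D : Set (Fin n → ℝ))
    (K : (Fin n → ℝ) → (Fin n → ℝ) → ℝ) (k a : (Fin n → ℝ) → ℝ) : ℝ :=
  sSup {μ : ℝ | ∃ φ : (Fin n → ℝ) → ℝ, ContinuousOn φ (closure D) ∧
      (∀ x ∈ closure D, 0 < φ x) ∧
      ∀ x ∈ D, (∫ y in D, K x y * φ y) - k x * φ x + a x * φ x + μ * φ x ≤ 0}

/-- The dual inf-characterization `μ_p'`. -/
noncomputable def muP' {n : ℕ} (D : Set (Fin n → ℝ))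
    (K : (Fin n → ℝ) → (Fin n → ℝ) → ℝ) (k a : (Fin n → ℝ) → ℝ) : ℝ :=
  sInf {μ : ℝ | ∃ φ : (Fin n → ℝ) → ℝ, ContinuousOn φ (closure D) ∧
      (∀ x ∈ closure D, 0 < φ x) ∧
      ∀ x ∈ D, 0 ≤ (∫ y in D, K x y * φ y) - k x * φ x + a x * φ x + μ * φ x}

/-! If `ψ > 0` is a supersolution for the value `μ₁` and `φ > 0` a subsolution for `μ₂`, then
cross-multiplying the two inequalities cancels the terms in `k` and `a`, leaving
`(μ₁ - μ₂) φ ψ ≤ ψ ∫ K φ - φ ∫ K ψ` on `Ω`, hence on `closure Ω` by continuity. At a maximum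
point of `φ / ψ` on the compact set `closure Ω` the right-hand side is `≤ 0` because `K ≥ 0`,
so `μ₁ ≤ μ₂`. Applied to the eigenfunction, `μ_p` is the least element of the set defining
`μ_p'`. -/

section KernelOperator

variable {X : Type*} [TopologicalSpace X] [T2Space X] [MeasurableSpace X] [OpensMeasurableSpace X]
  {ν : Measure X} [IsFiniteMeasureOnCompacts ν] {Ω : Set X} {K : X → X → ℝ} {f g : X → ℝ}

theorem integrableOn_kernel_mul (hΩ : IsCompact (closure Ω))
    (hK : Continuous (Function.uncurry K)) (hf : ContinuousOn f (closure Ω)) (x : X) :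
    IntegrableOn (fun y => K x y * f y) Ω ν :=
  ((hK.comp (Continuous.prodMk_right x)).continuousOn.mul hf
    |>.integrableOn_compact hΩ).mono_set subset_closure

theorem continuousOn_setIntegral_kernel_mul [FirstCountableTopology X] (hΩm : MeasurableSet Ω)
    (hΩ : IsCompact (closure Ω)) (hK : Continuous (Function.uncurry K))
    (hf : ContinuousOn f (closure Ω)) :
    ContinuousOn (fun x => ∫ y in Ω, K x y * f y ∂ν) (closure Ω) := by
  obtain ⟨CK, hCK⟩ := (hΩ.prod hΩ).exists_bound_of_continuousOn hK.continuousOn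
  obtain ⟨Cf, hCf⟩ := hΩ.exists_bound_of_continuousOn hf
  have hfin : ν Ω ≠ ⊤ := (measure_mono subset_closure |>.trans_lt hΩ.measure_lt_top).ne
  refine continuousOn_of_dominated (bound := fun _ => CK * Cf)
    (fun x _ => (integrableOn_kernel_mul hΩ hK hf x).aestronglyMeasurable)
    (fun x hx => (ae_restrict_iff' hΩm).2 <| .of_forall fun y hy =>
      norm_mul_le_of_le (hCK (x, y) ⟨hx, subset_closure hy⟩) (hCf y (subset_closure hy)))
    (integrableOn_const hfin) (.of_forall fun y => ?_)
  exact ((hK.comp (Continuous.prodMk_left y)).mul continuous_const).continuousOn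

theorem mul_setIntegral_kernel_le (hΩm : MeasurableSet Ω) (hΩ : IsCompact (closure Ω))
    (hK : Continuous (Function.uncurry K)) (hKnn : ∀ x y, 0 ≤ K x y)
    (hf : ContinuousOn f (closure Ω)) (hg : ContinuousOn g (closure Ω)) {x₀ : X} {c d : ℝ}
    (hcd : ∀ y ∈ Ω, c * f y ≤ d * g y) :
    c * ∫ y in Ω, K x₀ y * f y ∂ν ≤ d * ∫ y in Ω, K x₀ y * g y ∂ν := by
  rw [← integral_const_mul, ← integral_const_mul]
  refine setIntegral_mono_on ((integrableOn_kernel_mul hΩ hK hf x₀).const_mul c)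
    ((integrableOn_kernel_mul hΩ hK hg x₀).const_mul d) hΩm fun y hy => ?_
  calc c * (K x₀ y * f y) = K x₀ y * (c * f y) := by ring
    _ ≤ K x₀ y * (d * g y) := mul_le_mul_of_nonneg_left (hcd y hy) (hKnn x₀ y)
    _ = d * (K x₀ y * g y) := by ring

theorem le_of_supersolution_of_subsolution [FirstCountableTopology X] (hΩm : MeasurableSet Ω)
    (hΩ : IsCompact (closure Ω)) (hΩne : Ω.Nonempty)
    (hK : Continuous (Function.uncurry K)) (hKnn : ∀ x y, 0 ≤ K x y) {k a φ ψ : X → ℝ} {μ₁ μ₂ : ℝ}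
    (hψc : ContinuousOn ψ (closure Ω)) (hψpos : ∀ x ∈ closure Ω, 0 < ψ x)
    (hψ : ∀ x ∈ Ω, (∫ y in Ω, K x y * ψ y ∂ν) - k x * ψ x + a x * ψ x + μ₁ * ψ x ≤ 0)
    (hφc : ContinuousOn φ (closure Ω)) (hφpos : ∀ x ∈ closure Ω, 0 < φ x)
    (hφ : ∀ x ∈ Ω, 0 ≤ (∫ y in Ω, K x y * φ y ∂ν) - k x * φ x + a x * φ x + μ₂ * φ x) :
    μ₁ ≤ μ₂ := by
  set Lφ := fun x => ∫ y in Ω, K x y * φ y ∂ν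
  set Lψ := fun x => ∫ y in Ω, K x y * ψ y ∂ν
  have hcross : ∀ x ∈ Ω, (μ₁ - μ₂) * (φ x * ψ x) ≤ ψ x * Lφ x - φ x * Lψ x := fun x hx => by
    have hφψ := mul_nonneg (hφ x hx) (hψpos x (subset_closure hx)).le
    have hψφ := mul_nonpos_of_nonpos_of_nonneg (hψ x hx) (hφpos x (subset_closure hx)).le
    linear_combination hφψ + hψφ
  obtain ⟨x₀, hx₀, hmax⟩ := hΩ.exists_isMaxOn hΩne.closure
    (hφc.div hψc fun x hx => (hψpos x hx).ne')
  have hcross₀ : (μ₁ - μ₂) * (φ x₀ * ψ x₀) ≤ ψ x₀ * Lφ x₀ - φ x₀ * Lψ x₀ := by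
    have hLφ := continuousOn_setIntegral_kernel_mul (ν := ν) hΩm hΩ hK hφc
    have hLψ := continuousOn_setIntegral_kernel_mul (ν := ν) hΩm hΩ hK hψc
    refine ContinuousWithinAt.closure_le hx₀ ?_ ?_ hcross
    · exact ((hφc.mul hψc).const_smul (μ₁ - μ₂) x₀ hx₀).mono subset_closure
    · exact (((hψc.mul hLφ).sub (hφc.mul hLψ)) x₀ hx₀).mono subset_closure
  have hmax₀ : ψ x₀ * Lφ x₀ ≤ φ x₀ * Lψ x₀ :=
    mul_setIntegral_kernel_le hΩm hΩ hK hKnn hφc hψc fun y hy => by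
      have := hmax (subset_closure hy)
      rw [mem_ofPred_eq, Pi.div_apply, Pi.div_apply,
        div_le_div_iff₀ (hψpos y (subset_closure hy)) (hψpos x₀ hx₀)] at this
      linarith
  have hprod : 0 < φ x₀ * ψ x₀ := mul_pos (hφpos x₀ hx₀) (hψpos x₀ hx₀)
  exact sub_nonpos.1 (nonpos_of_mul_nonpos_left (hcross₀.trans (sub_nonpos.2 hmax₀)) hprod)

end KernelOperator

theorem stmt_5_general {n : ℕ} (Ω : Set (Fin n → ℝ))
    (hΩo : IsOpen Ω) (hΩb : Bornology.IsBounded Ω) (hΩne : Ω.Nonempty)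
    (K : (Fin n → ℝ) → (Fin n → ℝ) → ℝ)
    (hKc : Continuous fun p : (Fin n → ℝ) × (Fin n → ℝ) => K p.1 p.2)
    (hKnn : ∀ x y, 0 ≤ K x y)
    (k a : (Fin n → ℝ) → ℝ)
    (ψ : (Fin n → ℝ) → ℝ) (hψc : ContinuousOn ψ (closure Ω))
    (hψpos : ∀ x ∈ closure Ω, 0 < ψ x)
    (hψeig : ∀ x ∈ Ω,
      (∫ y in Ω, K x y * ψ y) - k x * ψ x + a x * ψ x + muP Ω K k a * ψ x = 0) :
    muP Ω K k a = muP' Ω K k a := by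
  refine Eq.symm (IsLeast.csInf_eq ⟨⟨ψ, hψc, hψpos, fun x hx => (hψeig x hx).ge⟩, ?_⟩)
  rintro μ ⟨φ, hφc, hφpos, hφ⟩
  exact le_of_supersolution_of_subsolution hΩo.measurableSet hΩb.isCompact_closure hΩne hKc hKnn
    hψc hψpos (fun x hx => (hψeig x hx).le) hφc hφpos hφ

/-- if `μ_p(𝓛_Ω + a)` admits a positive continuous eigenfunction and the
kernel has the local positivity property, then the sup- and inf-characterizations of
the principal eigenvalue coincide. -/
theorem stmt_5 {n : ℕ} (Ω : Set (Fin n → ℝ))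
    (hΩo : IsOpen Ω) (hΩb : Bornology.IsBounded Ω) (hΩne : Ω.Nonempty)
    (K : (Fin n → ℝ) → (Fin n → ℝ) → ℝ)
    (hKc : Continuous fun p : (Fin n → ℝ) × (Fin n → ℝ) => K p.1 p.2)
    (hKnn : ∀ x y, 0 ≤ K x y)
    (c₀ ε₀ : ℝ) (hc₀ : 0 < c₀) (hε₀ : 0 < ε₀)
    (hKpos : ∀ x ∈ Ω, ∀ y ∈ Metric.ball x ε₀, c₀ ≤ K x y)
    (k a : (Fin n → ℝ) → ℝ) (hk : ∀ x, k x = ∫ y in Ω, K y x)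
    (ha : ContinuousOn a (closure Ω))
    (ψ : (Fin n → ℝ) → ℝ) (hψc : ContinuousOn ψ (closure Ω))
    (hψpos : ∀ x ∈ closure Ω, 0 < ψ x)
    (hψeig : ∀ x ∈ Ω,
      (∫ y in Ω, K x y * ψ y) - k x * ψ x + a x * ψ x + muP Ω K k a * ψ x = 0) :
    muP Ω K k a = muP' Ω K k a :=
  stmt_5_general Ω hΩo hΩb hΩne K hKc hKnn k a ψ hψc hψpos hψeig
end

section
/- (Non-existence when the refuge eigenvalue is nonpositive: Fubini contradiction.) Suppose $u \in C(\bar\Omega)$ is a positive bounded solution of $\mathcal{L}_\Omega u + a u = 0$ on the refuge $\omega \subsetneq \Omega$ (i.e. $\int_\Omega K(x,y)u(y)dy - k(x)u(x) + a(x)u(x) = 0$ for $x \in \omega$), that $\phi^* \in C(\bar\omega)$ is a positive eigenfunction of the adjoint problem $\int_\omega K(y,x)\phi^*(y)dy - k(x)\phi^*(x) + a(x)\phi^*(x) = -\mu_p\phi^*(x)$ with $\mu_p \le 0$, and that $\int_\omega \phi^*(x)\int_{\Omega\setminus\omega}K(x,y)u(y)\,dy\,dx > 0$. Then a contradiction follows: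 $0 \le -\mu_p\int_\omega\phi^* u \le -\int_\omega\phi^*(x)\int_{\Omega\setminus\omega}K(x,y)u(y)\,dy\,dx < 0$. Hence no positive bounded solution of the refuge equation exists when $\mu_p(\mathcal{L}_\omega + a) \le 0$ under these hypotheses. -/
open MeasureTheory Set

/- Split `∫_Ω K(x,y) u(y) dy = c(x) u(x)` on `ω` into its `ω` and `Ω \ ω` parts and integrate
against `φ`. By Fubini the `ω × ω` part is `∫_ω (∫_ω K(x,y) φ(x) dx) u(y) dy`, which the adjoint
eigen-equation turns into `∫_ω (c - μp) φ u`; what remains is the outflux term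
`∫_ω φ(x) ∫_{Ω∖ω} K(x,y) u(y) dy dx = μp ∫_ω φ u`.
For `μp ≤ 0` and `φ, u > 0` it cannot be positive. -/

theorem Bornology.IsBounded.integrableOn_of_continuousOn_closure {X : Type*} [MetricSpace X]
    [ProperSpace X] [MeasurableSpace X] [OpensMeasurableSpace X] {μ : Measure X}
    [IsFiniteMeasureOnCompacts μ] {s : Set X} {f : X → ℝ}
    (hs : Bornology.IsBounded s) (hf : ContinuousOn f (closure s)) : IntegrableOn f s μ :=
  (hf.integrableOn_compact hs.isCompact_closure).mono_set subset_closure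

theorem setIntegral_mul_outflux_eq {X : Type*} [MeasurableSpace X] {μ : Measure X} [SFinite μ]
    {Ω ω : Set X} (hω : MeasurableSet ω) (hωΩ : ω ⊆ Ω) {K : X → X → ℝ} {c φ u : X → ℝ} {μp : ℝ}
    (hF : IntegrableOn (fun p : X × X => φ p.1 * (K p.1 p.2 * u p.2)) (ω ×ˢ Ω) (μ.prod μ))
    (hKu : ∀ x ∈ ω, IntegrableOn (fun y => K x y * u y) Ω μ)
    (hφu : IntegrableOn (fun x => φ x * u x) ω μ)
    (hu : ∀ x ∈ ω, ∫ y in Ω, K x y * u y ∂μ = c x * u x)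
    (hφ : ∀ y ∈ ω, ∫ x in ω, K x y * φ x ∂μ = (c y - μp) * φ y) :
    ∫ x in ω, φ x * ∫ y in Ω \ ω, K x y * u y ∂μ ∂μ = μp * ∫ x in ω, φ x * u x ∂μ := by
  have hF_on : ∀ T ⊆ Ω, Integrable (fun p : X × X => φ p.1 * (K p.1 p.2 * u p.2))
      ((μ.restrict ω).prod (μ.restrict T)) := fun T hT => by
    rw [Measure.prod_restrict]
    exact hF.mono_set (prod_mono subset_rfl hT)
  set A := fun x => φ x * ∫ y in ω, K x y * u y ∂μ
  set B := fun x => φ x * ∫ y in Ω \ ω, K x y * u y ∂μ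
  have hA : IntegrableOn A ω μ := by
    simpa only [A, IntegrableOn, integral_const_mul] using (hF_on ω hωΩ).integral_prod_left
  have hB : IntegrableOn B ω μ := by
    simpa only [B, IntegrableOn, integral_const_mul] using
      (hF_on (Ω \ ω) sdiff_subset).integral_prod_left
  have hAB : ∀ x ∈ ω, A x + B x = φ x * c x * u x := fun x hx => by
    have hsplit := setIntegral_union (μ := μ) disjoint_sdiff_left hω
      ((hKu x hx).mono_set sdiff_subset) ((hKu x hx).mono_set hωΩ)
    rw [sdiff_union_of_subset hωΩ, hu x hx] at hsplit
    simp only [A, B, ← mul_add]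
    rw [mul_assoc, hsplit, add_comm]
  have hA_eq : ∫ x in ω, A x ∂μ = ∫ y in ω, (c y - μp) * φ y * u y ∂μ := calc
    ∫ x in ω, A x ∂μ = ∫ x in ω, ∫ y in ω, φ x * (K x y * u y) ∂μ ∂μ := by
      simp only [A, integral_const_mul]
    _ = ∫ y in ω, ∫ x in ω, φ x * (K x y * u y) ∂μ ∂μ := integral_integral_swap (hF_on ω hωΩ)
    _ = ∫ y in ω, (c y - μp) * φ y * u y ∂μ := setIntegral_congr_fun hω fun y hy => by
      simp only [← hφ y hy, ← integral_mul_const, mul_comm (φ _), mul_assoc]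
  have hsum : ∫ x in ω, A x ∂μ + ∫ x in ω, B x ∂μ = ∫ x in ω, φ x * c x * u x ∂μ := by
    rw [← integral_add hA hB]
    exact setIntegral_congr_fun hω hAB
  have hcu : IntegrableOn (fun x => φ x * c x * u x) ω μ :=
    (hA.add hB).congr_fun hAB hω
  have hcμ : ∫ y in ω, (c y - μp) * φ y * u y ∂μ
      = ∫ x in ω, φ x * c x * u x ∂μ - μp * ∫ x in ω, φ x * u x ∂μ := by
    rw [← integral_const_mul, ← integral_sub hcu (hφu.const_mul μp)]
    exact integral_congr_ae (Filter.Eventually.of_forall fun y => by ring)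
  linarith

theorem stmt_12_general {n : ℕ} (Ω ω : Set (Fin n → ℝ))
    (hΩb : Bornology.IsBounded Ω)
    (hωo : IsOpen ω) (hωΩ : ω ⊆ Ω)
    (K : (Fin n → ℝ) → (Fin n → ℝ) → ℝ)
    (hKc : Continuous fun q : (Fin n → ℝ) × (Fin n → ℝ) => K q.1 q.2)
    (k a : (Fin n → ℝ) → ℝ)
    (u : (Fin n → ℝ) → ℝ) (huc : ContinuousOn u (closure Ω))
    (hupos : ∀ x ∈ closure Ω, 0 < u x)
    (heq : ∀ x ∈ ω, (∫ y in Ω, K x y * u y) - k x * u x + a x * u x = 0)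
    (μp : ℝ) (hμp : μp ≤ 0)
    (φs : (Fin n → ℝ) → ℝ) (hφsc : ContinuousOn φs (closure ω))
    (hφspos : ∀ x ∈ closure ω, 0 < φs x)
    (hφseig : ∀ x ∈ ω,
      (∫ y in ω, K y x * φs y) - k x * φs x + a x * φs x = -μp * φs x)
    (hcoupling : 0 < ∫ x in ω, φs x * ∫ y in Ω \ ω, K x y * u y) :
    False := by
  have hωcl : closure ω ⊆ closure Ω := closure_mono hωΩ
  have hF : ContinuousOn (fun p : (Fin n → ℝ) × (Fin n → ℝ) => φs p.1 * (K p.1 p.2 * u p.2))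
      (closure (ω ×ˢ Ω)) := by
    rw [closure_prod_eq]
    exact (hφsc.comp continuous_fst.continuousOn fun p hp => hp.1).mul
      (hKc.continuousOn.mul (huc.comp continuous_snd.continuousOn fun p hp => hp.2))
  have houtflux := setIntegral_mul_outflux_eq (c := k - a) (μp := μp) hωo.measurableSet hωΩ
    ((hΩb.subset hωΩ).prod hΩb |>.integrableOn_of_continuousOn_closure hF)
    (fun x _ => hΩb.integrableOn_of_continuousOn_closure
      ((hKc.comp (Continuous.prodMk_right x)).continuousOn.mul huc))
    ((hΩb.subset hωΩ).integrableOn_of_continuousOn_closure (hφsc.mul (huc.mono hωcl)))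
    (fun x hx => by simp only [Pi.sub_apply]; linarith [heq x hx])
    (fun y hy => by simp only [Pi.sub_apply]; linarith [hφseig y hy])
  have hφu : 0 ≤ ∫ x in ω, φs x * u x := setIntegral_nonneg hωo.measurableSet fun x hx =>
    (mul_pos (hφspos x (subset_closure hx)) (hupos x (hωcl (subset_closure hx)))).le
  linarith [mul_nonpos_of_nonpos_of_nonneg hμp hφu]

/-- non-existence when the refuge eigenvalue is nonpositive (Fubini
contradiction): there is no positive bounded continuous `u` solving the linear
equation on the refuge `ω` when the adjoint problem on `ω` has a positive
eigenfunction with eigenvalue `μ_p ≤ 0` and the coupling integral is positive. -/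
theorem stmt_12 {n : ℕ} (Ω ω : Set (Fin n → ℝ))
    (hΩo : IsOpen Ω) (hΩb : Bornology.IsBounded Ω)
    (hωo : IsOpen ω) (hωΩ : ω ⊆ Ω) (hωne : ω.Nonempty)
    (hmeas : 0 < volume (Ω \ ω))
    (K : (Fin n → ℝ) → (Fin n → ℝ) → ℝ)
    (hKc : Continuous fun q : (Fin n → ℝ) × (Fin n → ℝ) => K q.1 q.2)
    (hKnn : ∀ x y, 0 ≤ K x y)
    (c₀ ε₀ : ℝ) (hc₀ : 0 < c₀) (hε₀ : 0 < ε₀)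
    (hKpos : ∀ x ∈ Ω, ∀ y ∈ Metric.ball x ε₀, c₀ ≤ K x y)
    (k a : (Fin n → ℝ) → ℝ) (hk : ∀ x, k x = ∫ y in Ω, K y x)
    (ha : ContinuousOn a (closure Ω))
    (u : (Fin n → ℝ) → ℝ) (huc : ContinuousOn u (closure Ω))
    (hupos : ∀ x ∈ closure Ω, 0 < u x)
    (hub : ∃ M, ∀ x ∈ closure Ω, u x ≤ M)
    (heq : ∀ x ∈ ω, (∫ y in Ω, K x y * u y) - k x * u x + a x * u x = 0)
    (μp : ℝ) (hμp : μp ≤ 0)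
    (φs : (Fin n → ℝ) → ℝ) (hφsc : ContinuousOn φs (closure ω))
    (hφspos : ∀ x ∈ closure ω, 0 < φs x)
    (hφseig : ∀ x ∈ ω,
      (∫ y in ω, K y x * φs y) - k x * φs x + a x * φs x = -μp * φs x)
    (hcoupling : 0 < ∫ x in ω, φs x * ∫ y in Ω \ ω, K x y * u y) :
    False :=
  stmt_12_general Ω ω hΩb hωo hωΩ K hKc k a u huc hupos heq μp hμp φs hφsc hφspos hφseig hcoupling
end

section
/- (Monotonicity of positive solutions in the control parameter.) For $\lambda' \le \lambda$, if $u_{\lambda'}$ and $u_\lambda$ are the unique positive bounded continuous solutions of $\mathcal{L}_\Omega u + a_0 u + \lambda a_1 u - \beta u^p = 0$ on $\Omega$ with $a_1 \ge 0$, then $u_{\lambda'} \le u_\lambda$ pointwise. (Key step: $u_{\lambda'}$ is a subsolution of the equation at parameter $\lambda$, i.e. $\mathcal{L}_\Omega u_{\lambda'} + a_0 u_{\lambda'} + \lambda a_1 u_{\lambda'} - \beta u_{\lambda'}^p \ge 0$.) -/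
/-!
Since `a₁ ≥ 0`, a solution at `λ'` is a subsolution at `λ`, and it lies below the solution at `λ`
by a comparison principle proved by sweeping: let `θ` be the maximum of `v / u` over `closure Ω`, attained at `x₀`, so
that `w = θ u - v ≥ 0` vanishes at `x₀`. If `θ > 1`, subtracting the subsolution inequality for `v`
from `θ` times the supersolution inequality for `u`, and dropping `∫ K w ≥ 0`, gives
`(c - k) w + β v ^ p - θ β u ^ p ≤ 0` on `Ω`. With `k` bounded above this extends by continuity
to `x₀`, where it reads `β u ^ p (θ ^ p - θ) ≤ 0`, which is absurd for `p > 1`.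
-/

open MeasureTheory Set

section LogisticResidual

variable {E : Type*} [MeasurableSpace E] (μ : Measure E) (Ω : Set E) (K : E → E → ℝ)
  (k c β : E → ℝ) (p : ℝ)

/-- `ℒ_Ω u + c u - β u ^ p` at `x`, where `ℒ_Ω u = ∫_Ω K(·, y) u(y) dy - k u`. -/
noncomputable def logisticResidual (u : E → ℝ) (x : E) : ℝ :=
  (∫ y in Ω, K x y * u y ∂μ) - k x * u x + c x * u x - β x * u x ^ p

lemma logisticResidual_add_mul (a₀ a₁ : E → ℝ) (lam : ℝ) (u : E → ℝ) (x : E) :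
    logisticResidual μ Ω K k (fun x => a₀ x + lam * a₁ x) β p u x =
      (∫ y in Ω, K x y * u y ∂μ) - k x * u x + a₀ x * u x + lam * a₁ x * u x - β x * u x ^ p := by
  unfold logisticResidual
  ring

variable {μ Ω K k c β p}

lemma logisticResidual_mono_coeff {c' : E → ℝ} {u : E → ℝ} {x : E} (hc : c x ≤ c' x)
    (hu : 0 ≤ u x) :
    logisticResidual μ Ω K k c β p u x ≤ logisticResidual μ Ω K k c' β p u x := by
  unfold logisticResidual
  linarith [mul_le_mul_of_nonneg_right hc hu]

lemma logisticResidual_sub_smul_nonpos {u v : E → ℝ} {x : E} {θ : ℝ} (hΩ : MeasurableSet Ω)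
    (hK : ∀ y ∈ Ω, 0 ≤ K x y) (hIu : IntegrableOn (fun y => K x y * u y) Ω μ)
    (hIv : IntegrableOn (fun y => K x y * v y) Ω μ) (hθ : 0 ≤ θ) (hvu : ∀ y ∈ Ω, v y ≤ θ * u y)
    (hsub : 0 ≤ logisticResidual μ Ω K k c β p v x)
    (hsuper : logisticResidual μ Ω K k c β p u x ≤ 0) :
    (c x - k x) * (θ * u x - v x) + β x * v x ^ p - θ * (β x * u x ^ p) ≤ 0 := by
  have hKv_le : ∫ y in Ω, K x y * v y ∂μ ≤ θ * ∫ y in Ω, K x y * u y ∂μ := by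
    rw [← integral_const_mul]
    refine setIntegral_mono_on hIv (hIu.const_mul θ) hΩ fun y hy => ?_
    calc K x y * v y ≤ K x y * (θ * u y) := mul_le_mul_of_nonneg_left (hvu y hy) (hK y hy)
      _ = θ * (K x y * u y) := by ring
  unfold logisticResidual at hsub hsuper
  linarith [mul_nonpos_of_nonneg_of_nonpos hθ hsuper]

theorem logisticResidual_comparison [TopologicalSpace E] (hΩ : MeasurableSet Ω)
    (hcl : IsCompact (closure Ω)) (hK : ∀ x ∈ Ω, ∀ y ∈ Ω, 0 ≤ K x y) (hk : ∃ B, ∀ x ∈ Ω, k x ≤ B)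
    (hc : ContinuousOn c (closure Ω)) (hβc : ContinuousOn β (closure Ω))
    (hβ : ∀ x ∈ closure Ω, 0 < β x) (hp : 1 < p) {u v : E → ℝ}
    (huc : ContinuousOn u (closure Ω)) (hvc : ContinuousOn v (closure Ω))
    (hu : ∀ x ∈ closure Ω, 0 < u x)
    (hIu : ∀ x ∈ Ω, IntegrableOn (fun y => K x y * u y) Ω μ)
    (hIv : ∀ x ∈ Ω, IntegrableOn (fun y => K x y * v y) Ω μ)
    (hsub : ∀ x ∈ Ω, 0 ≤ logisticResidual μ Ω K k c β p v x)
    (hsuper : ∀ x ∈ Ω, logisticResidual μ Ω K k c β p u x ≤ 0) :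
    ∀ x ∈ closure Ω, v x ≤ u x := by
  intro x hx
  obtain ⟨x₀, hx₀, hmax⟩ :=
    hcl.exists_isMaxOn ⟨x, hx⟩ (hvc.div huc fun y hy => (hu y hy).ne')
  set θ := v x₀ / u x₀
  have hvθ : ∀ y ∈ closure Ω, v y ≤ θ * u y := fun y hy =>
    (div_le_iff₀ (hu y hy)).1 (hmax hy)
  have hv₀ : v x₀ = θ * u x₀ := (div_mul_cancel₀ _ (hu x₀ hx₀).ne').symm
  suffices θ ≤ 1 from (hvθ x hx).trans (mul_le_of_le_one_left (hu x hx).le this)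
  by_contra! hθ
  obtain ⟨B, hB⟩ := hk
  set F := fun y => (c y - B) * (θ * u y - v y) + β y * v y ^ p - θ * (β y * u y ^ p)
  have hFΩ : ∀ y ∈ Ω, F y ≤ 0 := fun y hy => by
    have hw : 0 ≤ θ * u y - v y := sub_nonneg.2 (hvθ y (subset_closure hy))
    have := logisticResidual_sub_smul_nonpos hΩ (hK y hy) (hIu y hy) (hIv y hy) (by linarith)
      (fun z hz => hvθ z (subset_closure hz)) (hsub y hy) (hsuper y hy)
    linarith [mul_le_mul_of_nonneg_right (hB y hy) hw]
  have hFc : ContinuousOn F (closure Ω) := by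
    have hp0 : 0 ≤ p := by linarith
    refine ((hc.sub continuousOn_const).mul ((continuousOn_const.mul huc).sub hvc)).add
      (hβc.mul (hvc.rpow_const fun _ _ => Or.inr hp0)) |>.sub
      (continuousOn_const.mul (hβc.mul (huc.rpow_const fun _ _ => Or.inr hp0)))
  have hF₀ : F x₀ ≤ 0 :=
    ((hFc x₀ hx₀).mono subset_closure).closure_le hx₀ continuousWithinAt_const hFΩ
  have hθp : θ < θ ^ p := by simpa using Real.rpow_lt_rpow_of_exponent_lt hθ hp
  have hF₀_eq : F x₀ = β x₀ * u x₀ ^ p * (θ ^ p - θ) := by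
    simp only [F, hv₀, sub_self, mul_zero, zero_add, Real.mul_rpow (by linarith : (0 : ℝ) ≤ θ)
      (hu x₀ hx₀).le]
    ring
  have : 0 < β x₀ * u x₀ ^ p * (θ ^ p - θ) :=
    mul_pos (mul_pos (hβ x₀ hx₀) (Real.rpow_pos_of_pos (hu x₀ hx₀) p)) (by linarith)
  linarith

end LogisticResidual

lemma exists_forall_setIntegral_kernel_le {E : Type*} [TopologicalSpace E] [MeasurableSpace E]
    {μ : Measure E} {Ω : Set E} (hcl : IsCompact (closure Ω)) (hμ : μ Ω < ⊤) {K : E → E → ℝ}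
    (hK : Continuous fun q : E × E => K q.1 q.2) :
    ∃ B, ∀ x ∈ Ω, ∫ y in Ω, K y x ∂μ ≤ B := by
  obtain ⟨C, hC⟩ := (hcl.prod hcl).exists_bound_of_continuousOn hK.continuousOn
  exact ⟨C * μ.real Ω, fun x hx => (Real.le_norm_self _).trans <| norm_setIntegral_le_of_norm_le_const
    hμ fun y hy => hC (y, x) ⟨subset_closure hy, subset_closure hx⟩⟩

theorem stmt_13_general {n : ℕ} (Ω : Set (Fin n → ℝ))
    (hΩo : IsOpen Ω) (hΩb : Bornology.IsBounded Ω)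
    (K : (Fin n → ℝ) → (Fin n → ℝ) → ℝ)
    (hKc : Continuous fun q : (Fin n → ℝ) × (Fin n → ℝ) => K q.1 q.2)
    (hKnn : ∀ x y, 0 ≤ K x y)
    (k : (Fin n → ℝ) → ℝ) (hk : ∀ x, k x = ∫ y in Ω, K y x)
    (a₀ a₁ β : (Fin n → ℝ) → ℝ)
    (ha₀ : ContinuousOn a₀ (closure Ω)) (ha₁ : ContinuousOn a₁ (closure Ω))
    (hβ : ContinuousOn β (closure Ω))
    (ha₁nn : ∀ x ∈ closure Ω, 0 ≤ a₁ x) (hβpos : ∀ x ∈ closure Ω, 0 < β x)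
    (p : ℝ) (hp : 1 < p)
    (lam' lam : ℝ) (hlam : lam' ≤ lam)
    (u' u : (Fin n → ℝ) → ℝ)
    (hu'c : ContinuousOn u' (closure Ω)) (huc : ContinuousOn u (closure Ω))
    (hu'pos : ∀ x ∈ closure Ω, 0 < u' x) (hupos : ∀ x ∈ closure Ω, 0 < u x)
    (heq' : ∀ x ∈ Ω, (∫ y in Ω, K x y * u' y) - k x * u' x + a₀ x * u' x
        + lam' * a₁ x * u' x - β x * u' x ^ p = 0)
    (heq : ∀ x ∈ Ω, (∫ y in Ω, K x y * u y) - k x * u x + a₀ x * u x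
        + lam * a₁ x * u x - β x * u x ^ p = 0) :
    (∀ x ∈ Ω, 0 ≤ (∫ y in Ω, K x y * u' y) - k x * u' x + a₀ x * u' x
        + lam * a₁ x * u' x - β x * u' x ^ p) ∧
      ∀ x ∈ closure Ω, u' x ≤ u x := by
  have hcl : IsCompact (closure Ω) := hΩb.isCompact_closure
  have hsub : ∀ x ∈ Ω, 0 ≤ logisticResidual volume Ω K k (fun x => a₀ x + lam * a₁ x) β p u' x :=
    fun x hx => by
      have hx' := subset_closure hx
      calc (0 : ℝ) = logisticResidual volume Ω K k (fun x => a₀ x + lam' * a₁ x) β p u' x := by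
            rw [logisticResidual_add_mul, heq' x hx]
        _ ≤ _ := logisticResidual_mono_coeff
            (add_le_add_right (mul_le_mul_of_nonneg_right hlam (ha₁nn x hx')) _) (hu'pos x hx').le
  have hKint : ∀ v, ContinuousOn v (closure Ω) → ∀ x, IntegrableOn (fun y => K x y * v y) Ω :=
    fun v hv x => (((hKc.comp (Continuous.prodMk_right x)).continuousOn.mul hv).integrableOn_compact
      hcl).mono_set subset_closure
  refine ⟨fun x hx => by simpa only [logisticResidual_add_mul] using hsub x hx, ?_⟩
  refine logisticResidual_comparison hΩo.measurableSet hcl (fun x _ y _ => hKnn x y)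
    ?_ (ha₀.add (continuousOn_const.mul ha₁)) hβ hβpos hp huc hu'c hupos
    (fun x _ => hKint u huc x) (fun x _ => hKint u' hu'c x) hsub
    fun x hx => (logisticResidual_add_mul _ _ _ _ _ _ _ _ _ _ _).trans_le (heq x hx).le
  simpa only [hk] using exists_forall_setIntegral_kernel_le hcl hΩb.measure_lt_top hKc

/-- monotonicity of positive solutions in the control parameter:
for `λ' ≤ λ`, a positive solution `u'` at parameter `λ'` is a subsolution at
parameter `λ`, and (by uniqueness of the positive solution `u` at `λ`)
`u' ≤ u` pointwise. -/
theorem stmt_13 {n : ℕ} (Ω : Set (Fin n → ℝ))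
    (hΩo : IsOpen Ω) (hΩb : Bornology.IsBounded Ω) (hΩne : Ω.Nonempty)
    (K : (Fin n → ℝ) → (Fin n → ℝ) → ℝ)
    (hKc : Continuous fun q : (Fin n → ℝ) × (Fin n → ℝ) => K q.1 q.2)
    (hKnn : ∀ x y, 0 ≤ K x y)
    (c₀ ε₀ : ℝ) (hc₀ : 0 < c₀) (hε₀ : 0 < ε₀)
    (hKpos : ∀ x ∈ Ω, ∀ y ∈ Metric.ball x ε₀, c₀ ≤ K x y)
    (k : (Fin n → ℝ) → ℝ) (hk : ∀ x, k x = ∫ y in Ω, K y x)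
    (a₀ a₁ β : (Fin n → ℝ) → ℝ)
    (ha₀ : ContinuousOn a₀ (closure Ω)) (ha₁ : ContinuousOn a₁ (closure Ω))
    (hβ : ContinuousOn β (closure Ω))
    (ha₁nn : ∀ x ∈ closure Ω, 0 ≤ a₁ x) (hβpos : ∀ x ∈ closure Ω, 0 < β x)
    (p : ℝ) (hp : 1 < p)
    (lam' lam : ℝ) (hlam : lam' ≤ lam)
    (u' u : (Fin n → ℝ) → ℝ)
    (hu'c : ContinuousOn u' (closure Ω)) (huc : ContinuousOn u (closure Ω))
    (hu'pos : ∀ x ∈ closure Ω, 0 < u' x) (hupos : ∀ x ∈ closure Ω, 0 < u x)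
    (hu'b : ∃ M, ∀ x ∈ closure Ω, u' x ≤ M) (hub : ∃ M, ∀ x ∈ closure Ω, u x ≤ M)
    (heq' : ∀ x ∈ Ω, (∫ y in Ω, K x y * u' y) - k x * u' x + a₀ x * u' x
        + lam' * a₁ x * u' x - β x * u' x ^ p = 0)
    (heq : ∀ x ∈ Ω, (∫ y in Ω, K x y * u y) - k x * u x + a₀ x * u x
        + lam * a₁ x * u x - β x * u x ^ p = 0)
    -- uniqueness of the positive bounded continuous solution at parameter `lam`
    (huniq : ∀ v : (Fin n → ℝ) → ℝ, ContinuousOn v (closure Ω) →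
      (∀ x ∈ closure Ω, 0 < v x) → (∃ M, ∀ x ∈ closure Ω, v x ≤ M) →
      (∀ x ∈ Ω, (∫ y in Ω, K x y * v y) - k x * v x + a₀ x * v x
        + lam * a₁ x * v x - β x * v x ^ p = 0) →
      ∀ x ∈ closure Ω, v x = u x) :
    (∀ x ∈ Ω, 0 ≤ (∫ y in Ω, K x y * u' y) - k x * u' x + a₀ x * u' x
        + lam * a₁ x * u' x - β x * u' x ^ p) ∧
      ∀ x ∈ closure Ω, u' x ≤ u x :=
  stmt_13_general Ω hΩo hΩb K hKc hKnn k hk a₀ a₁ β ha₀ ha₁ hβ ha₁nn hβpos p hp lam' lam hlam u' u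
    hu'c huc hu'pos hupos heq' heq
end
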